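/- On the Shishkin mesh, assume the transition point satisfies ρ = ā⁻¹ ε ln N ≤ T/2. Then the coarse-part sum satisfies: Σ_{j=N/2+1}^{N} ∫_{ξ_{j−1}}^{ξ_j} (ξ_j − τ)(τ − ξ_{j−1}) ε⁻² e^{−ā τ/ε} dτ ≤ 2 ā⁻² h⁽²⁾ (e^{−ā ρ/ε} − e^{−ā T/ε}) ≤ 2 ā⁻² h⁽²⁾ N⁻¹ ≤ 4 T ā⁻² N⁻². -/

import Mathlib

/-- Shishkin transition point `ρ = min(T/2, ā⁻¹ ε ln N)`. -/
noncomputable def sRho (T abar ε : ℝ) (N : ℕ) : ℝ :=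
  min (T / 2) (abar⁻¹ * ε * Real.log N)

/-- Fine step size `h⁽¹⁾ = 2ρ/N`. -/
noncomputable def sH1 (T abar ε : ℝ) (N : ℕ) : ℝ := 2 * sRho T abar ε N / N

/-- Coarse step size `h⁽²⁾ = 2(T−ρ)/N`. -/
noncomputable def sH2 (T abar ε : ℝ) (N : ℕ) : ℝ :=
  2 * (T - sRho T abar ε N) / N

/-- Shishkin mesh points `ξ_i`. -/
noncomputable def sXi (T abar ε : ℝ) (N i : ℕ) : ℝ :=
  if i ≤ N / 2 then (i : ℝ) * sH1 T abar ε N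
  else sRho T abar ε N + ((i : ℝ) - (N : ℝ) / 2) * sH2 T abar ε N

/-! With `λ = ā/ε`, bounding `b − τ` by the cell length `b − a` reduces a cell integral to
`ā⁻² (b − a) ∫_a^b (τ − a) λ² e^{−λτ} dτ`, and the antiderivative `−(λ(τ − a) + 1) e^{−λτ}` shows
that this last integral is `e^{−λa} − (1 + λ(b − a)) e^{−λb} ≤ e^{−λa} − e^{−λb}`. All coarse cells have
length `h⁽²⁾`, so these bounds telescope to `ā⁻² h⁽²⁾ (e^{−āρ/ε} − e^{−āT/ε})`. Finally
`e^{−āρ/ε} = N⁻¹` for `ρ = ā⁻¹ ε ln N`, and `h⁽²⁾ ≤ 2T/N`. -/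

open Real Finset

theorem Finset.sum_Icc_pred_sub {M : Type*} [AddCommGroup M] (f : ℕ → M) {m n : ℕ} (h : m ≤ n) :
    ∑ j ∈ Icc (m + 1) n, (f (j - 1) - f j) = f m - f n := by
  induction n, h using Nat.le_induction with
  | base => simp
  | succ n _ ih =>
    rw [sum_Icc_succ_top (by omega), ih, Nat.add_sub_cancel]
    abel

theorem hasDerivAt_neg_linear_mul_exp (l a τ : ℝ) :
    HasDerivAt (fun τ => -((l * (τ - a) + 1) * exp (-(l * τ))))
      ((τ - a) * (l ^ 2 * exp (-(l * τ)))) τ := by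
  have hexp : HasDerivAt (fun τ => exp (-(l * τ))) (-l * exp (-(l * τ))) τ := by
    simpa [mul_comm] using ((hasDerivAt_id τ).const_mul l).neg.exp
  have hlin : HasDerivAt (fun τ => l * (τ - a) + 1) l τ := by
    simpa using (((hasDerivAt_id τ).sub_const a).const_mul l).add_const 1
  exact (hlin.fun_mul hexp).fun_neg.congr_deriv (by ring)

theorem integral_sub_mul_sq_mul_exp (l a b : ℝ) :
    ∫ τ in a..b, (τ - a) * (l ^ 2 * exp (-(l * τ)))
      = exp (-(l * a)) - (l * (b - a) + 1) * exp (-(l * b)) := by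
  rw [intervalIntegral.integral_eq_sub_of_hasDerivAt
    (fun τ _ => hasDerivAt_neg_linear_mul_exp l a τ)
    (by apply Continuous.intervalIntegrable; fun_prop)]
  ring

theorem integral_sub_mul_sq_mul_exp_le {l a b : ℝ} (hl : 0 ≤ l) (hab : a ≤ b) :
    ∫ τ in a..b, (τ - a) * (l ^ 2 * exp (-(l * τ))) ≤ exp (-(l * a)) - exp (-(l * b)) := by
  have : 0 ≤ l * (b - a) * exp (-(l * b)) := by have := sub_nonneg.2 hab; positivity
  rw [integral_sub_mul_sq_mul_exp]
  linarith

theorem integral_bubble_mul_exp_le {abar ε a b : ℝ} (habar : 0 < abar) (hε : 0 < ε) (hab : a ≤ b) :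
    ∫ τ in a..b, (b - τ) * (τ - a) * ((ε ^ 2)⁻¹ * exp (-(abar * τ) / ε))
      ≤ (abar ^ 2)⁻¹ * (b - a) * (exp (-(abar * a) / ε) - exp (-(abar * b) / ε)) := by
  set l := abar / ε with hl
  have hexp (τ : ℝ) : -(abar * τ) / ε = -(l * τ) := by ring
  have hweight : (ε ^ 2)⁻¹ = (abar ^ 2)⁻¹ * l ^ 2 := by rw [hl]; field_simp
  simp only [hexp, hweight]
  calc ∫ τ in a..b, (b - τ) * (τ - a) * ((abar ^ 2)⁻¹ * l ^ 2 * exp (-(l * τ)))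
      ≤ ∫ τ in a..b, (abar ^ 2)⁻¹ * (b - a) * ((τ - a) * (l ^ 2 * exp (-(l * τ)))) := by
        refine intervalIntegral.integral_mono_on hab
          (by apply Continuous.intervalIntegrable; fun_prop)
          (by apply Continuous.intervalIntegrable; fun_prop) fun τ hτ => ?_
        have : 0 ≤ (τ - a) * (l ^ 2 * exp (-(l * τ))) := by have := sub_nonneg.2 hτ.1; positivity
        calc (b - τ) * (τ - a) * ((abar ^ 2)⁻¹ * l ^ 2 * exp (-(l * τ)))
            = (abar ^ 2)⁻¹ * (b - τ) * ((τ - a) * (l ^ 2 * exp (-(l * τ)))) := by ring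
          _ ≤ _ := by gcongr; exact hτ.1
    _ = (abar ^ 2)⁻¹ * (b - a) * ∫ τ in a..b, (τ - a) * (l ^ 2 * exp (-(l * τ))) :=
        intervalIntegral.integral_const_mul _ _
    _ ≤ _ := by
        gcongr
        exact integral_sub_mul_sq_mul_exp_le (by positivity) hab

section ShishkinMesh

variable {T abar ε : ℝ} {N : ℕ}

theorem sRho_nonneg (hT : 0 ≤ T) (habar : 0 ≤ abar) (hε : 0 ≤ ε) : 0 ≤ sRho T abar ε N :=
  le_min (by linarith) (by have := Real.log_natCast_nonneg N; positivity)

theorem exp_neg_mul_sRho_div (habar : 0 < abar) (hε : 0 < ε) (hN : 0 < N)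
    (h : abar⁻¹ * ε * log N ≤ T / 2) : exp (-(abar * sRho T abar ε N) / ε) = (N : ℝ)⁻¹ := by
  have : -(abar * (abar⁻¹ * ε * log N)) / ε = -log N := by field_simp
  rw [sRho, min_eq_right h, this, exp_neg, exp_log (by exact_mod_cast hN)]

theorem sH2_nonneg (hT : 0 ≤ T) : 0 ≤ sH2 T abar ε N := by
  have : sRho T abar ε N ≤ T / 2 := min_le_left _ _
  unfold sH2
  exact div_nonneg (by linarith) N.cast_nonneg

theorem sH2_le_two_mul_div (hρ : 0 ≤ sRho T abar ε N) : sH2 T abar ε N ≤ 2 * T / N := by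
  unfold sH2
  gcongr
  linarith

theorem sXi_of_half_le (hN : 0 < N) (hNeven : Even N) {j : ℕ} (hj : N / 2 ≤ j) :
    sXi T abar ε N j = sRho T abar ε N + ((j : ℝ) - N / 2) * sH2 T abar ε N := by
  unfold sXi
  split_ifs with hj'
  · obtain rfl : j = N / 2 := le_antisymm hj' hj
    have : (N : ℝ) ≠ 0 := by positivity
    rw [Nat.cast_div hNeven.two_dvd two_ne_zero, sH1]
    field_simp
    ring
  · rfl

theorem sXi_half (hN : 0 < N) (hNeven : Even N) : sXi T abar ε N (N / 2) = sRho T abar ε N := by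
  rw [sXi_of_half_le hN hNeven le_rfl, Nat.cast_div hNeven.two_dvd two_ne_zero]
  ring

theorem sXi_self (hN : 0 < N) : sXi T abar ε N N = T := by
  have : (N : ℝ) ≠ 0 := by positivity
  rw [sXi, if_neg (by omega), sH2]
  field_simp
  ring

theorem sXi_sub_sXi_pred (hN : 0 < N) (hNeven : Even N) {j : ℕ} (hj : N / 2 < j) :
    sXi T abar ε N j - sXi T abar ε N (j - 1) = sH2 T abar ε N := by
  rw [sXi_of_half_le hN hNeven hj.le, sXi_of_half_le hN hNeven (by omega), Nat.cast_pred (by omega)]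
  ring

theorem sum_coarse_integral_le (hT : 0 ≤ T) (habar : 0 < abar) (hε : 0 < ε) (hN : 0 < N)
    (hNeven : Even N) :
    (∑ j ∈ Icc (N / 2 + 1) N,
        ∫ τ in sXi T abar ε N (j - 1)..sXi T abar ε N j,
          (sXi T abar ε N j - τ) * (τ - sXi T abar ε N (j - 1)) *
            ((ε ^ 2)⁻¹ * exp (-(abar * τ) / ε)))
      ≤ (abar ^ 2)⁻¹ * sH2 T abar ε N *
          (exp (-(abar * sRho T abar ε N) / ε) - exp (-(abar * T) / ε)) := by
  set g : ℕ → ℝ := fun j => exp (-(abar * sXi T abar ε N j) / ε)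
  have hH2 : 0 ≤ sH2 T abar ε N := sH2_nonneg hT
  calc _ ≤ ∑ j ∈ Icc (N / 2 + 1) N, (abar ^ 2)⁻¹ * sH2 T abar ε N * (g (j - 1) - g j) := by
        refine sum_le_sum fun j hj => ?_
        have hstep := sXi_sub_sXi_pred (T := T) (abar := abar) (ε := ε) hN hNeven
          (Nat.lt_of_succ_le (mem_Icc.1 hj).1)
        rw [← hstep]
        exact integral_bubble_mul_exp_le habar hε (by linarith)
    _ = _ := by
        rw [← mul_sum, sum_Icc_pred_sub g (Nat.div_le_self N 2)]
        simp only [g, sXi_half hN hNeven, sXi_self hN]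

end ShishkinMesh

theorem coarse_part_quadrature_sum_bound_general
    (T abar ε : ℝ) (N : ℕ) (hT : 0 < T) (habar : 0 < abar)
    (hε : 0 < ε) (hN : 4 ≤ N) (hNeven : Even N)
    (hρ : abar⁻¹ * ε * Real.log N ≤ T / 2) :
    (∑ j ∈ Finset.Icc (N / 2 + 1) N,
        ∫ τ in sXi T abar ε N (j - 1)..sXi T abar ε N j,
          (sXi T abar ε N j - τ) * (τ - sXi T abar ε N (j - 1)) *
            ((ε ^ 2)⁻¹ * Real.exp (-(abar * τ) / ε)))
      ≤ 2 * (abar ^ 2)⁻¹ * sH2 T abar ε N *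
          (Real.exp (-(abar * sRho T abar ε N) / ε) - Real.exp (-(abar * T) / ε)) ∧
    2 * (abar ^ 2)⁻¹ * sH2 T abar ε N *
          (Real.exp (-(abar * sRho T abar ε N) / ε) - Real.exp (-(abar * T) / ε))
      ≤ 2 * (abar ^ 2)⁻¹ * sH2 T abar ε N * (N : ℝ)⁻¹ ∧
    2 * (abar ^ 2)⁻¹ * sH2 T abar ε N * (N : ℝ)⁻¹
      ≤ 4 * T * (abar ^ 2)⁻¹ * ((N : ℝ) ^ 2)⁻¹ := by
  have hN0 : 0 < N := by omega
  have hρ0 : 0 ≤ sRho T abar ε N := sRho_nonneg hT.le habar.le hε.le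
  have hρT : sRho T abar ε N ≤ T := (min_le_left _ _).trans (by linarith)
  have hH2 : 0 ≤ sH2 T abar ε N := sH2_nonneg hT.le
  have hcoeff : 0 ≤ (abar ^ 2)⁻¹ * sH2 T abar ε N := mul_nonneg (by positivity) hH2
  refine ⟨?_, ?_, ?_⟩
  · have hdecay : exp (-(abar * T) / ε) ≤ exp (-(abar * sRho T abar ε N) / ε) := by gcongr
    have := mul_nonneg hcoeff (sub_nonneg.2 hdecay)
    linarith [sum_coarse_integral_le hT.le habar hε hN0 hNeven]
  · rw [exp_neg_mul_sRho_div habar hε hN0 hρ]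
    exact mul_le_mul_of_nonneg_left (sub_le_self _ (exp_pos _).le) (by linarith)
  · calc _ ≤ 2 * (abar ^ 2)⁻¹ * (2 * T / N) * (N : ℝ)⁻¹ := by
          gcongr
          exact sH2_le_two_mul_div hρ0
      _ = _ := by field_simp; ring

/-- coarse-part bound
`Σ_{j=N/2+1}^{N} ∫_{ξ_{j−1}}^{ξ_j} (ξ_j−τ)(τ−ξ_{j−1}) ε⁻² e^{−ā τ/ε} dτ
 ≤ 2 ā⁻² h⁽²⁾ (e^{−ā ρ/ε} − e^{−ā T/ε}) ≤ 2 ā⁻² h⁽²⁾ N⁻¹ ≤ 4 T ā⁻² N⁻²`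
on the Shishkin mesh, assuming `ρ = ā⁻¹ ε ln N ≤ T/2`. -/
theorem coarse_part_quadrature_sum_bound
    (T abar ε : ℝ) (N : ℕ) (hT : 0 < T) (habar : 0 < abar)
    (hε : 0 < ε) (hε1 : ε ≤ 1) (hN : 4 ≤ N) (hNeven : Even N)
    (hρ : abar⁻¹ * ε * Real.log N ≤ T / 2) :
    (∑ j ∈ Finset.Icc (N / 2 + 1) N,
        ∫ τ in sXi T abar ε N (j - 1)..sXi T abar ε N j,
          (sXi T abar ε N j - τ) * (τ - sXi T abar ε N (j - 1)) *
            ((ε ^ 2)⁻¹ * Real.exp (-(abar * τ) / ε)))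
      ≤ 2 * (abar ^ 2)⁻¹ * sH2 T abar ε N *
          (Real.exp (-(abar * sRho T abar ε N) / ε) - Real.exp (-(abar * T) / ε)) ∧
    2 * (abar ^ 2)⁻¹ * sH2 T abar ε N *
          (Real.exp (-(abar * sRho T abar ε N) / ε) - Real.exp (-(abar * T) / ε))
      ≤ 2 * (abar ^ 2)⁻¹ * sH2 T abar ε N * (N : ℝ)⁻¹ ∧
    2 * (abar ^ 2)⁻¹ * sH2 T abar ε N * (N : ℝ)⁻¹
      ≤ 4 * T * (abar ^ 2)⁻¹ * ((N : ℝ) ^ 2)⁻¹ :=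
  coarse_part_quadrature_sum_bound_general T abar ε N hT habar hε hN hNeven hρ
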